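/- Let V be a vector space over ℚ, let N be a natural number, let h ∈ V, and let f : ℕ → V satisfy the inhomogeneous second-order difference equation f(i+2) − 2·f(i+1) + f(i) = h for all natural numbers i with i ≤ N − 2. Then for all natural numbers i, l with i ≤ N and l ≤ N one has (l : ℚ) • f(i) = (i : ℚ) • f(l) + ((l : ℚ) − (i : ℚ)) • f(0) − ((l·i·(l − i))/2 : ℚ) • h, where l, i, l − i are interpreted as rational numbers (so l − i may be negative). -/
import Mathlib


/-- Lemma 6.3 (difference-equation lemma). If `f : ℕ → V` satisfies the
inhomogeneous second-order difference equation `f (i+2) - 2 • f (i+1) + f i = h`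
for all `i ≤ N - 2`, then
`l • f i = i • f l + (l - i) • f 0 - (l * i * (l - i) / 2) • h` for `i, l ≤ N`. -/
theorem difference_equation_lemma
    (V : Type*) [AddCommGroup V] [Module ℚ V] (N : ℕ) (h : V) (f : ℕ → V)
    (hf : ∀ i : ℕ, i + 2 ≤ N → f (i + 2) - (2 : ℚ) • f (i + 1) + f i = h) :
    ∀ i l : ℕ, i ≤ N → l ≤ N →
      (l : ℚ) • f i =
        (i : ℚ) • f l + ((l : ℚ) - (i : ℚ)) • f 0
          - (((l : ℚ) * (i : ℚ) * ((l : ℚ) - (i : ℚ))) / 2) • h := by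
  have key : ∀ i, i ≤ N →
      f i = f 0 + (i : ℚ) • (f 1 - f 0) + ((i : ℚ) * ((i : ℚ) - 1) / 2) • h := by
    intro i
    induction i using Nat.strong_induction_on with
    | _ i ih =>
      match i with
      | 0 => intro _; norm_num
      | 1 => intro _; norm_num
      | (k+2) =>
        intro hk
        have h1 := ih (k+1) (by omega) (by omega)
        have h0 := ih k (by omega) (by omega)
        have h2 := hf k hk
        have hf2 : f (k+2) = h + (2:ℚ) • f (k+1) - f k := by
          linear_combination (norm := module) h2
        rw [hf2, h1, h0]
        push_cast
        module
  intro i l hi hl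
  rw [key i hi, key l hl]
  module
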